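/- arXiv:2001.03974 — 3 statements merged into one kernel-verified Lean document; each statement's English description precedes it below -/
import Mathlib

section
/- The four-step explicit method with α = (8/9, 0, 0, 1/9), β = (4/3, 0, 0, 0) has nonnegative α summing to 1 and satisfies the explicit order conditions of order 2 but not of order 3. -/
open Finset

/-- Order-`p` conditions for an explicit `s`-step linear multistep method with
coefficients `ta j = ã_j`, `tb j = b̃_j`. -/
def ExplicitOrderCond (s p : ℕ) (ta tb : Fin s → ℝ) : Prop :=
  (1 + ∑ j : Fin s, ta j = 0) ∧
  ∀ k : ℕ, 1 ≤ k → k ≤ p →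
    1 / (Nat.factorial k : ℝ)
        + ∑ j : Fin s, (-(j : ℕ) : ℝ) ^ k / (Nat.factorial k : ℝ) * ta j
      = ∑ j : Fin s, (-(j : ℕ) : ℝ) ^ (k - 1) / (Nat.factorial (k - 1) : ℝ) * tb j

/-- The four-step explicit method (`α = (8/9,0,0,1/9)`, `β = (4/3,0,0,0)`) has
nonnegative `α` summing to 1 and satisfies the order-2 conditions but not the
order-3 conditions. -/
theorem stmt_14 :
    (∀ j : Fin 4, 0 ≤ (![(8 / 9 : ℝ), 0, 0, 1 / 9]) j) ∧
    (∑ j : Fin 4, (![(8 / 9 : ℝ), 0, 0, 1 / 9]) j = 1) ∧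
    ExplicitOrderCond 4 2 (fun j => -(![(8 / 9 : ℝ), 0, 0, 1 / 9]) j)
      ![(4 / 3 : ℝ), 0, 0, 0] ∧
    ¬ ExplicitOrderCond 4 3 (fun j => -(![(8 / 9 : ℝ), 0, 0, 1 / 9]) j)
      ![(4 / 3 : ℝ), 0, 0, 0] := by
  refine ⟨?_, ?_, ⟨?_, ?_⟩, ?_⟩
  · intro j; fin_cases j <;> norm_num
  · simp [Fin.sum_univ_four]; norm_num
  · simp [Fin.sum_univ_four]; norm_num
  · intro k hk1 hk2
    interval_cases k <;> simp [Fin.sum_univ_four] <;> norm_num [show ((3:Fin 4):ℕ)=3 from rfl]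
  · rintro ⟨-, h⟩
    have := h 3 (by norm_num) le_rfl
    simp [Fin.sum_univ_four] at this
    norm_num [show ((3:Fin 4):ℕ)=3 from rfl, Nat.factorial] at this
end

section
/- Suppose an explicit multistep method has the SSP form u^{n+1} = ∑_{j=0}^{s−1}(α_j u^{n−j} + Δt β_j f(u^{n−j})) with α_j ≥ 0, ∑_j α_j = 1, and β_j ≥ 0. If forward Euler is strongly stable for a convex functional ‖·‖ under Δt ≤ Δt_FE (i.e. ‖u + Δt f(u)‖ ≤ ‖u‖ for all u whenever Δt ≤ Δt_FE), then the method satisfies ‖u^{n+1}‖ ≤ max_{0≤j≤s−1} ‖u^{n−j}‖ whenever Δt ≤ C·Δt_FE with C = min{α_j/β_j : β_j > 0}. -/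
open Finset

/-- SSP property of explicit multistep methods: if forward Euler is strongly
stable for a seminorm `N` under `Δt ≤ ΔtFE`, and the method has nonnegative
coefficients `α_j` (summing to 1) and `β_j`, then for
`Δt ≤ C·ΔtFE` with `C = min{α_j/β_j : β_j > 0}` the new value satisfies
`N u^{n+1} ≤ max_j N u^{n−j}`. -/
theorem stmt_15 {m s : ℕ} (hs : 0 < s)
    (N : Seminorm ℝ (Fin m → ℝ)) (f : (Fin m → ℝ) → (Fin m → ℝ))
    (α β : Fin s → ℝ)
    (hα : ∀ j, 0 ≤ α j) (hαsum : ∑ j, α j = 1) (hβ : ∀ j, 0 ≤ β j)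
    (ΔtFE : ℝ) (hFE : 0 < ΔtFE)
    (hmono : ∀ Δt : ℝ, 0 < Δt → Δt ≤ ΔtFE → ∀ u, N (u + Δt • f u) ≤ N u)
    (Δt : ℝ) (hΔt : 0 < Δt)
    (hC : ∀ j, 0 < β j → Δt ≤ α j / β j * ΔtFE)
    (w : Fin s → (Fin m → ℝ)) :
    N (∑ j, (α j • w j + (Δt * β j) • f (w j)))
      ≤ Finset.univ.sup' ⟨⟨0, hs⟩, Finset.mem_univ _⟩ (fun j => N (w j)) := by
  set M := Finset.univ.sup' ⟨⟨0, hs⟩, Finset.mem_univ _⟩ (fun j => N (w j)) with hM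
  have hMle : ∀ j, N (w j) ≤ M := fun j =>
    Finset.le_sup' (fun j => N (w j)) (Finset.mem_univ j)
  have key : ∀ j : Fin s, N (α j • w j + (Δt * β j) • f (w j)) ≤ α j * M := by
    intro j
    rcases eq_or_lt_of_le (hβ j) with hb | hb
    · have : (Δt * β j) = 0 := by rw [← hb]; ring
      rw [this, zero_smul, add_zero, map_smul_eq_mul, Real.norm_eq_abs,
        abs_of_nonneg (hα j)]
      exact mul_le_mul_of_nonneg_left (hMle j) (hα j)
    · have hCj := hC j hb
      have ha : 0 < α j := by
        by_contra h
        push_neg at h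
        have : α j = 0 := le_antisymm h (hα j)
        rw [this, zero_div, zero_mul] at hCj
        linarith
      set c := Δt * β j / α j with hc
      have hc0 : 0 < c := div_pos (mul_pos hΔt hb) ha
      have hcle : c ≤ ΔtFE := by
        rw [hc, div_le_iff₀ ha]
        have : Δt * β j ≤ α j / β j * ΔtFE * β j :=
          mul_le_mul_of_nonneg_right hCj (hβ j)
        calc Δt * β j ≤ α j / β j * ΔtFE * β j := this
          _ = ΔtFE * α j := by field_simp
      have heq : α j • w j + (Δt * β j) • f (w j) = α j • (w j + c • f (w j)) := by
        rw [smul_add, smul_smul, hc]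
        congr 1
        field_simp
      rw [heq, map_smul_eq_mul, Real.norm_eq_abs, abs_of_nonneg ha.le]
      calc α j * N (w j + c • f (w j)) ≤ α j * N (w j) :=
            mul_le_mul_of_nonneg_left (hmono c hc0 hcle (w j)) ha.le
        _ ≤ α j * M := mul_le_mul_of_nonneg_left (hMle j) ha.le
  calc N (∑ j, (α j • w j + (Δt * β j) • f (w j)))
      ≤ ∑ j, N (α j • w j + (Δt * β j) • f (w j)) :=
        Finset.le_sum_of_subadditive N (map_zero N).le (map_add_le_add N) _ _
    _ ≤ ∑ j, α j * M := Finset.sum_le_sum fun j _ => key j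
    _ = M := by rw [← Finset.sum_mul, hαsum, one_mul]
end

section
/- For the scalar test equation u' = iλu + μu with μ < 0 and Δt > 0, applying the first-order semi-implicit scheme (predictor u^{n+1} = u^n, corrector v^{n+1} = v^n + Δt(iλ u^{n+1} + μ v^{n+1})) with u^n = v^n yields v^{n+1} = ((1 + iλΔt)/(1 − μΔt)) v^n, and the amplification factor satisfies |(1 + iλΔt)/(1 − μΔt)| ≤ 1 if and only if λ²Δt ≤ μ²Δt − 2μ. -/
open Complex

/-- For the test equation `u' = iλu + μu` with `μ < 0`, the first-order
semi-implicit scheme gives `v^{n+1} = ((1+iλΔt)/(1−μΔt)) vⁿ`, and the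
amplification factor has modulus ≤ 1 iff `λ²Δt ≤ μ²Δt − 2μ`. -/
theorem stmt_18 (lam mu Δt : ℝ) (hmu : mu < 0) (hΔt : 0 < Δt)
    (un vn un1 vn1 : ℂ) (huv : un = vn) (hpred : un1 = un)
    (hcorr : vn1 = vn + (Δt : ℂ) * (Complex.I * (lam : ℂ) * un1 + (mu : ℂ) * vn1)) :
    vn1 = (1 + Complex.I * (lam : ℂ) * (Δt : ℂ)) / (1 - (mu : ℂ) * (Δt : ℂ)) * vn ∧
    (‖(1 + Complex.I * (lam : ℂ) * (Δt : ℂ)) / (1 - (mu : ℂ) * (Δt : ℂ))‖ ≤ 1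
      ↔ lam ^ 2 * Δt ≤ mu ^ 2 * Δt - 2 * mu) := by
  have hpos : (0:ℝ) < 1 - mu * Δt := by nlinarith
  have hne : (1 - (mu : ℂ) * (Δt : ℂ)) ≠ 0 := by
    have : ((1 - mu * Δt : ℝ) : ℂ) ≠ 0 := by exact_mod_cast hpos.ne'
    push_cast at this; convert this using 1
  constructor
  · subst hpred huv
    rw [div_mul_eq_mul_div, eq_div_iff hne]
    linear_combination hcorr
  · rw [norm_div]
    have h1 : ‖(1 - (mu : ℂ) * (Δt : ℂ))‖ = 1 - mu * Δt := by
      rw [show (1 - (mu : ℂ) * (Δt : ℂ)) = ((1 - mu * Δt : ℝ) : ℂ) by push_cast; ring,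
        Complex.norm_real, Real.norm_eq_abs, abs_of_pos hpos]
    rw [h1, div_le_one hpos]
    have hsq : ‖(1 + Complex.I * (lam : ℂ) * (Δt : ℂ))‖ ^ 2 = 1 + lam^2 * Δt^2 := by
      rw [Complex.sq_norm, Complex.normSq_apply]
      simp; ring
    have hnn := norm_nonneg (1 + Complex.I * (lam : ℂ) * (Δt : ℂ))
    constructor
    · intro h; nlinarith [sq_nonneg (‖(1 + Complex.I * (lam : ℂ) * (Δt : ℂ))‖)]
    · intro h; nlinarith [sq_nonneg (‖(1 + Complex.I * (lam : ℂ) * (Δt : ℂ))‖ - (1 - mu*Δt))]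
end
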